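/- Let 0 < ε < 1 and let 𝒮 be a martingale ε-sparse family of triadic subintervals of [0,1). Let K ∈ 𝐊, set J := K^m, and let S(J) be the triadic child of K containing I(J). Define 𝒮¹_K := {I ∈ 𝒮 : I = K, or (I ⊆ J and I is not contained in any member of ch_𝐊(K))} and 𝒮²_K := {I ∈ 𝒮 : I(J) ⊊ I ⊆ S(J)}. There exists a constant C(p) > 0, depending only on p and independent of k, ε, 𝒮, K, and the choices of the intervals I(J), such that for m = 1, 2: Σ_{I ∈ 𝒮^m_K} ⟨w_k⟩_I^p·⟨σ_k⟩_I·|I| ≤ C(p)·3^{−k}·w_k(K)/(1−ε) and Σ_{I ∈ 𝒮^m_K} ⟨σ_k⟩_I^{p'}·⟨w_k⟩_I·|I| ≤ C(p)·σ_k(K)/(1−ε), where p' := p/(p−1). -/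

import Mathlib

open MeasureTheory Set Filter

noncomputable section

namespace RTpaper

/-- The half-open interval `[a, b)` represented by the pair `(a, b)`. -/
def ivSet (I : ℝ × ℝ) : Set ℝ := Set.Ico I.1 I.2

/-- The length of the interval represented by `I`. -/
def len (I : ℝ × ℝ) : ℝ := I.2 - I.1

/-- The middle triadic child of an interval. -/
def mid (I : ℝ × ℝ) : ℝ × ℝ := (I.1 + (I.2 - I.1) / 3, I.2 - (I.2 - I.1) / 3)

/-- The families `𝐊ᵢ` of the Reguera–Thiele construction. -/
def Kfam (k : ℕ) : ℕ → Set (ℝ × ℝ)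
  | 0 => {((0 : ℝ), (1 : ℝ))}
  | (i + 1) =>
      {I | ∃ K ∈ Kfam k i, ∃ j : ℕ, j < 3 ^ (k - 1) ∧
        I = ((mid K).1 + (j : ℝ) * ((3 : ℝ) ^ (1 - (k : ℤ)) * len (mid K)),
             (mid K).1 + ((j : ℝ) + 1) * ((3 : ℝ) ^ (1 - (k : ℤ)) * len (mid K)))}

/-- The families `𝐉ᵢ` (of interest for `i ≥ 1`). -/
def Jfam (k i : ℕ) : Set (ℝ × ℝ) := {J | ∃ K ∈ Kfam k (i - 1), J = mid K}

/-- The family `𝐊 = ⋃ᵢ 𝐊ᵢ`. -/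
def KK (k : ℕ) : Set (ℝ × ℝ) := ⋃ i, Kfam k i

/-- The family `𝐉 = ⋃_{i ≥ 1} 𝐉ᵢ`. -/
def JJ (k : ℕ) : Set (ℝ × ℝ) := ⋃ i, Jfam k (i + 1)

/-- The chosen triadic interval `I(J)` adjacent to `J` of length `3^{1-k}|J|`, encoded by a
choice function `ch` deciding, for each `J`, whether `I(J)` lies to the right (`true`) or to
the left (`false`) of `J`. -/
def IJ (k : ℕ) (ch : ℝ × ℝ → Bool) (J : ℝ × ℝ) : ℝ × ℝ :=
  if ch J then (J.2, J.2 + (3 : ℝ) ^ (1 - (k : ℤ)) * len J)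
  else (J.1 - (3 : ℝ) ^ (1 - (k : ℤ)) * len J, J.1)

/-- The weight `w_k = Σ_{i ≥ 1} Σ_{J ∈ 𝐉ᵢ} (3^k/(3^{k-1}+1))^i · 1_{I(J)}`. -/
def wgt (k : ℕ) (ch : ℝ × ℝ → Bool) (x : ℝ) : ℝ :=
  ∑' i : ℕ, ∑' J : ↥(Jfam k (i + 1)),
    Set.indicator (ivSet (IJ k ch (J : ℝ × ℝ)))
      (fun _ => ((3 : ℝ) ^ k / ((3 : ℝ) ^ (k - 1) + 1)) ^ (i + 1)) x

/-- The weight `σ_k = w_k^{1-p}` on `{w_k > 0}`, and `0` elsewhere. -/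
def sgm (p : ℝ) (k : ℕ) (ch : ℝ × ℝ → Bool) (x : ℝ) : ℝ :=
  if 0 < wgt k ch x then wgt k ch x ^ (1 - p) else 0

/-- `u(I) = ∫_I u`. -/
def mass (u : ℝ → ℝ) (I : ℝ × ℝ) : ℝ := ∫ x in ivSet I, u x

/-- `⟨u⟩_I = u(I)/|I|`. -/
def avg (u : ℝ → ℝ) (I : ℝ × ℝ) : ℝ := mass u I / len I

/-- `ch_𝐊(K)`: the members of `𝐊_{i+1}` contained in `K ∈ 𝐊ᵢ`. -/
def chK (k : ℕ) (K : ℝ × ℝ) : Set (ℝ × ℝ) :=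
  {K' | ∃ i, K ∈ Kfam k i ∧ K' ∈ Kfam k (i + 1) ∧ ivSet K' ⊆ ivSet K}

/-- Triadic intervals of `ℝ`. -/
def IsTriadic (I : ℝ × ℝ) : Prop :=
  ∃ n j : ℤ, I.1 = (j : ℝ) * (3 : ℝ) ^ (-n) ∧ I.2 = ((j : ℝ) + 1) * (3 : ℝ) ^ (-n)

/-- Maximal members of `S` strictly contained in `R`. -/
def maxIn (S : Set (ℝ × ℝ)) (R : ℝ × ℝ) : Set (ℝ × ℝ) :=
  {Q | Q ∈ S ∧ ivSet Q ⊂ ivSet R ∧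
    ∀ Q' ∈ S, ivSet Q ⊆ ivSet Q' → ivSet Q' ⊂ ivSet R → ivSet Q' = ivSet Q}

/-- Martingale `ε`-sparse families of (half-open) intervals. -/
def MSparse (ε : ℝ) (S : Set (ℝ × ℝ)) : Prop :=
  S.Countable ∧ (∀ I ∈ S, I.1 < I.2) ∧
    (∀ I ∈ S, ∀ J ∈ S, ivSet I ⊆ ivSet J ∨ ivSet J ⊆ ivSet I ∨ ivSet I ∩ ivSet J = ∅) ∧
    ∀ R ∈ S, (∑' Q : ↥(maxIn S R), len (Q : ℝ × ℝ)) ≤ ε * len R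

/-- `Σ_{I ∈ F} ⟨u⟩_I^q · ⟨v⟩_I · |I|`. -/
def sumTest (q : ℝ) (u v : ℝ → ℝ) (F : Set (ℝ × ℝ)) : ℝ :=
  ∑' I : ↥F, avg u (I : ℝ × ℝ) ^ q * avg v (I : ℝ × ℝ) * len (I : ℝ × ℝ)


/-!
With `a = 3^k/(3^{k-1}+1)` and `b = a^{1-p}`, the intervals `I(J)` are pairwise disjoint and
`w_k = a^{i+1}`, `σ_k = b^{i+1}` on `I(J)`, `J ∈ 𝐉_{i+1}`: both weights are layer functions
`r^{i+1}` on the `i`-th layer. Inside `K ∈ 𝐊_j` the layer `j + d` has total length `3^{-d}|I(K^m)|`,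
so a geometric series of ratio `r/3` gives the average `r^j κ(r)` over `K`, and `r^{j+1} κ(r)`
over every union of children of `K`, with `κ(r) = r 3^{-k}/(1 - r/3)` and `κ(a) = 1`. An interval
of `𝒮²_K` of length `3^m |I(K^m)|` only meets the layer `I(K^m)`, so its averages are
`r^{j+1} 3^{-m}`. As `a^p b = a` and `b^{p'} a = b`, each testing term becomes explicit. Over
`𝒮¹_K` it is a constant times `|I|`, and the members other than `K` lie in `K^m` and pack:
`(1-ε) Σ |I| ≤ |K^m|`, because the sets `I \ ⋃ {maximal members of 𝒮 strictly inside I}` are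
pairwise disjoint and each has measure at least `(1-ε)|I|`. Over `𝒮²_K` distinct members have
distinct `m ≥ 1`, and the terms form a geometric series of ratio `3^{-q} ≤ 1/3`.
-/

section Intervals

lemma len_pos {I : ℝ × ℝ} (h : I.1 < I.2) : 0 < len I := sub_pos.2 h

lemma volume_ivSet (I : ℝ × ℝ) : volume (ivSet I) = ENNReal.ofReal (len I) := Real.volume_Ico

lemma ivSet_nonempty {I : ℝ × ℝ} (h : I.1 < I.2) : (ivSet I).Nonempty := nonempty_Ico.2 h

lemma eq_of_ivSet_eq {I J : ℝ × ℝ} (hI : I.1 < I.2) (h : ivSet I = ivSet J) : I = J := by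
  obtain ⟨h1, h2⟩ := (Ico_eq_Ico_iff (Or.inl hI)).1 h
  exact Prod.ext h1 h2

lemma ivSet_eq_of_subset_of_len_le {I J : ℝ × ℝ} (hI : I.1 < I.2) (hsub : ivSet I ⊆ ivSet J)
    (hlen : len J ≤ len I) : ivSet J = ivSet I := by
  obtain ⟨h1, h2⟩ := (Ico_subset_Ico_iff hI).1 hsub
  unfold len at hlen
  rw [ivSet, ivSet, show J.1 = I.1 by linarith, show J.2 = I.2 by linarith]

lemma Ico_add_mul_biUnion (c L : ℝ) (hL : 0 ≤ L) (N : ℕ) :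
    ⋃ l ∈ Finset.range N, Ico (c + l * L) (c + (l + 1) * L) = Ico c (c + N * L) := by
  induction N with
  | zero => simp
  | succ N ih =>
    rw [Finset.range_add_one, Finset.set_biUnion_insert, ih, union_comm,
      Ico_union_Ico_eq_Ico (by nlinarith [N.cast_nonneg (α := ℝ)]) (by nlinarith)]
    push_cast
    ring_nf

end Intervals

section Triadic

def IsTriadicAt (n : ℤ) (I : ℝ × ℝ) : Prop :=
  ∃ j : ℤ, I.1 = j * (3 : ℝ) ^ (-n) ∧ I.2 = (j + 1) * (3 : ℝ) ^ (-n)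

namespace IsTriadicAt

variable {n m : ℤ} {I I' : ℝ × ℝ}

lemma len_eq (h : IsTriadicAt n I) : len I = (3 : ℝ) ^ (-n) := by
  obtain ⟨j, h1, h2⟩ := h
  rw [len, h1, h2]
  ring

lemma fst_lt_snd (h : IsTriadicAt n I) : I.1 < I.2 := by
  rw [← sub_pos, ← len, h.len_eq]
  positivity

lemma subset_or_disjoint (hI : IsTriadicAt n I) (hI' : IsTriadicAt m I') (hnm : n ≤ m) :
    ivSet I' ⊆ ivSet I ∨ Disjoint (ivSet I') (ivSet I) := by
  obtain ⟨u, hu1, hu2⟩ := hI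
  obtain ⟨v, hv1, hv2⟩ := hI'
  obtain ⟨d, rfl⟩ : ∃ d : ℕ, m = n + d := ⟨(m - n).toNat, by omega⟩
  have hscale : (3 : ℝ) ^ (-n) = 3 ^ d * 3 ^ (-(n + d)) := by
    rw [← zpow_natCast, ← zpow_add₀ (by norm_num)]
    ring_nf
  have hpos : (0 : ℝ) < 3 ^ (-(n + d)) := by positivity
  rw [ivSet, ivSet, hu1, hu2, hv1, hv2, hscale, Ico_disjoint_Ico]
  rcases lt_or_ge v (u * 3 ^ d) with hlt | hge
  · right
    have : (v : ℝ) + 1 ≤ u * 3 ^ d := by exact_mod_cast (show v + 1 ≤ u * 3 ^ d by omega)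
    exact min_le_of_left_le (le_max_of_le_right (by nlinarith))
  rcases le_or_gt ((u + 1) * 3 ^ d) v with hge' | hlt'
  · right
    have : ((u : ℝ) + 1) * 3 ^ d ≤ v := by exact_mod_cast hge'
    exact min_le_of_right_le (le_max_of_le_left (by nlinarith))
  · left
    have h1 : (u : ℝ) * 3 ^ d ≤ v := by exact_mod_cast hge
    have h2 : (v : ℝ) + 1 ≤ (u + 1) * 3 ^ d := by
      exact_mod_cast (show v + 1 ≤ (u + 1) * 3 ^ d by omega)
    apply Ico_subset_Ico <;> nlinarith

lemma eq_of_not_disjoint (hI : IsTriadicAt n I) (hI' : IsTriadicAt n I')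
    (h : ¬ Disjoint (ivSet I) (ivSet I')) : I = I' := by
  rcases hI'.subset_or_disjoint hI le_rfl with hsub | hdisj
  · exact eq_of_ivSet_eq hI.fst_lt_snd
      (ivSet_eq_of_subset_of_len_le hI.fst_lt_snd hsub (by rw [hI.len_eq, hI'.len_eq])).symm
  · exact absurd hdisj h

lemma nonneg_of_subset (h : IsTriadicAt n I) (hsub : ivSet I ⊆ Ico 0 1) : 0 ≤ n := by
  obtain ⟨h1, h2⟩ := (Ico_subset_Ico_iff h.fst_lt_snd).1 hsub
  have hle : (3 : ℝ) ^ (-n) ≤ 3 ^ (0 : ℤ) := by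
    rw [← h.len_eq, zpow_zero, len]
    linarith
  have := (zpow_le_zpow_iff_right₀ (by norm_num : (1 : ℝ) < 3)).1 hle
  omega

end IsTriadicAt

end Triadic

section Construction

/-- The length of the members of `𝐊ᵢ`. -/
def levelLen (k i : ℕ) : ℝ := (3 : ℝ) ^ (-((i * k : ℕ) : ℤ))

/-- The `l`-th member of `ch_𝐊(K)`, from the left. -/
def Kchild (k : ℕ) (K : ℝ × ℝ) (l : ℕ) : ℝ × ℝ :=
  ((mid K).1 + l * ((3 : ℝ) ^ (1 - (k : ℤ)) * len (mid K)),
   (mid K).1 + (l + 1) * ((3 : ℝ) ^ (1 - (k : ℤ)) * len (mid K)))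

variable {k : ℕ}

lemma three_pow_eq_three_mul (hk : 1 ≤ k) : (3 : ℝ) ^ k = 3 * 3 ^ (k - 1) := by
  rw [← pow_succ', Nat.sub_add_cancel hk]

lemma levelLen_pos (k i : ℕ) : 0 < levelLen k i := by unfold levelLen; positivity

lemma levelLen_one (k : ℕ) : levelLen k 1 = (3 : ℝ) ^ (-(k : ℤ)) := by simp [levelLen]

lemma levelLen_succ (k i : ℕ) : levelLen k (i + 1) = levelLen k i * levelLen k 1 := by
  simp only [levelLen, ← zpow_add₀ (three_ne_zero' ℝ)]
  push_cast
  ring_nf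

lemma three_pow_mul_levelLen_succ (k i : ℕ) : 3 ^ k * levelLen k (i + 1) = levelLen k i := by
  rw [levelLen_succ, levelLen_one, mul_left_comm, ← zpow_natCast, ← zpow_add₀ three_ne_zero,
    add_neg_cancel, zpow_zero, mul_one]

lemma three_pow_pred_mul_levelLen_succ (hk : 1 ≤ k) (i : ℕ) :
    3 ^ (k - 1) * levelLen k (i + 1) = levelLen k i / 3 := by
  rw [← three_pow_mul_levelLen_succ k i, three_pow_eq_three_mul hk]
  ring

lemma levelLen_one_le_third (hk : 1 ≤ k) : levelLen k 1 ≤ 1 / 3 := by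
  rw [levelLen_one, show (1 : ℝ) / 3 = 3 ^ (-1 : ℤ) by norm_num]
  exact zpow_le_zpow_right₀ (by norm_num) (by omega)

lemma levelLen_succ_le_third (hk : 1 ≤ k) (i : ℕ) : levelLen k (i + 1) ≤ levelLen k i / 3 := by
  rw [levelLen_succ]
  nlinarith [levelLen_one_le_third hk, levelLen_pos k i]

lemma len_mid (K : ℝ × ℝ) : len (mid K) = len K / 3 := by
  simp only [len, mid]
  ring

lemma mid_subset {K : ℝ × ℝ} (h : K.1 < K.2) : ivSet (mid K) ⊆ ivSet K := by
  apply Ico_subset_Ico <;> simp only [mid] <;> linarith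

lemma zpow_one_sub_mul_len_mid {i : ℕ} {K : ℝ × ℝ} (hK : len K = levelLen k i) :
    (3 : ℝ) ^ (1 - (k : ℤ)) * len (mid K) = levelLen k (i + 1) := by
  rw [len_mid, hK, ← three_pow_mul_levelLen_succ k i, zpow_sub₀ three_ne_zero, zpow_natCast]
  field_simp

lemma Kchild_eq {i : ℕ} {K : ℝ × ℝ} (hK : len K = levelLen k i) (l : ℕ) :
    Kchild k K l = (K.1 + levelLen k i / 3 + l * levelLen k (i + 1),
      K.1 + levelLen k i / 3 + (l + 1) * levelLen k (i + 1)) := by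
  rw [Kchild, zpow_one_sub_mul_len_mid hK, mid, ← hK, len]

lemma Kfam.isTriadicAt (hk : 1 ≤ k) {i : ℕ} {K : ℝ × ℝ} (hK : K ∈ Kfam k i) :
    IsTriadicAt ((i * k : ℕ) : ℤ) K := by
  induction i generalizing K with
  | zero =>
    obtain rfl : K = (0, 1) := hK
    exact ⟨0, by simp, by simp⟩
  | succ i ih =>
    obtain ⟨K₀, hK₀, l, -, rfl⟩ := hK
    obtain ⟨j, h1, -⟩ := ih hK₀
    change IsTriadicAt _ (Kchild k K₀ l)
    have hi : levelLen k i = 3 ^ k * levelLen k (i + 1) := (three_pow_mul_levelLen_succ k i).symm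
    rw [Kchild_eq (ih hK₀).len_eq]
    refine ⟨j * 3 ^ k + 3 ^ (k - 1) + l, ?_, ?_⟩ <;>
    · change _ = _ * levelLen k (i + 1)
      change K₀.1 = j * levelLen k i at h1
      rw [h1, hi]
      push_cast
      rw [three_pow_eq_three_mul hk]
      ring

lemma Kfam.len_eq (hk : 1 ≤ k) {i : ℕ} {K : ℝ × ℝ} (hK : K ∈ Kfam k i) : len K = levelLen k i :=
  (Kfam.isTriadicAt hk hK).len_eq

lemma Kfam.fst_lt_snd (hk : 1 ≤ k) {i : ℕ} {K : ℝ × ℝ} (hK : K ∈ Kfam k i) : K.1 < K.2 :=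
  (Kfam.isTriadicAt hk hK).fst_lt_snd

end Construction

section Geometry

variable {k : ℕ}

lemma Kfam.snd_eq (hk : 1 ≤ k) {i : ℕ} {K : ℝ × ℝ} (hK : K ∈ Kfam k i) :
    K.2 = K.1 + levelLen k i := by
  rw [← Kfam.len_eq hk hK, len]
  ring

lemma Kfam.mid_eq (hk : 1 ≤ k) {i : ℕ} {K : ℝ × ℝ} (hK : K ∈ Kfam k i) :
    mid K = (K.1 + levelLen k i / 3, K.1 + 2 * levelLen k i / 3) := by
  rw [mid, Kfam.snd_eq hk hK]
  ext <;> ring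

lemma Kchild_mem {i : ℕ} {K : ℝ × ℝ} (hK : K ∈ Kfam k i) {l : ℕ} (hl : l < 3 ^ (k - 1)) :
    Kchild k K l ∈ Kfam k (i + 1) :=
  ⟨K, hK, l, hl, rfl⟩

lemma Kfam.disjoint (hk : 1 ≤ k) {i : ℕ} {K K' : ℝ × ℝ} (hK : K ∈ Kfam k i)
    (hK' : K' ∈ Kfam k i) (hne : K ≠ K') : Disjoint (ivSet K) (ivSet K') := by
  by_contra h
  exact hne ((Kfam.isTriadicAt hk hK).eq_of_not_disjoint (Kfam.isTriadicAt hk hK') h)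

lemma ivSet_mid_eq_biUnion_Kchild (hk : 1 ≤ k) {i : ℕ} {K : ℝ × ℝ} (hK : K ∈ Kfam k i) :
    ivSet (mid K) = ⋃ l ∈ Finset.range (3 ^ (k - 1)), ivSet (Kchild k K l) := by
  simp only [ivSet, Kchild_eq (Kfam.len_eq hk hK)]
  rw [Ico_add_mul_biUnion _ _ (levelLen_pos k (i + 1)).le, Kfam.mid_eq hk hK]
  push_cast
  rw [three_pow_pred_mul_levelLen_succ hk]
  ring_nf

lemma Kchild_subset_mid (hk : 1 ≤ k) {i : ℕ} {K : ℝ × ℝ} (hK : K ∈ Kfam k i) {l : ℕ}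
    (hl : l < 3 ^ (k - 1)) : ivSet (Kchild k K l) ⊆ ivSet (mid K) := by
  rw [ivSet_mid_eq_biUnion_Kchild hk hK]
  exact subset_biUnion_of_mem (u := fun l => ivSet (Kchild k K l)) (Finset.mem_range.2 hl)

lemma Kchild_mem_chK (hk : 1 ≤ k) {i : ℕ} {K : ℝ × ℝ} (hK : K ∈ Kfam k i) {l : ℕ}
    (hl : l < 3 ^ (k - 1)) : Kchild k K l ∈ chK k K :=
  ⟨i, hK, Kchild_mem hK hl, (Kchild_subset_mid hk hK hl).trans (mid_subset (Kfam.fst_lt_snd hk hK))⟩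

lemma Kchild_injective (hk : 1 ≤ k) {i : ℕ} {K : ℝ × ℝ} (hK : K ∈ Kfam k i) :
    Function.Injective (Kchild k K) := by
  intro l l' h
  rw [Kchild_eq (Kfam.len_eq hk hK), Kchild_eq (Kfam.len_eq hk hK), Prod.mk.injEq] at h
  have := levelLen_pos k (i + 1)
  exact_mod_cast mul_right_cancel₀ this.ne' (add_left_cancel h.1)

lemma pairwiseDisjoint_Kchild (hk : 1 ≤ k) {i : ℕ} {K : ℝ × ℝ} (hK : K ∈ Kfam k i)
    (G : Finset ℕ) (hG : ∀ l ∈ G, l < 3 ^ (k - 1)) :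
    (G : Set ℕ).PairwiseDisjoint (fun l => ivSet (Kchild k K l)) :=
  fun l hl l' hl' hne => Kfam.disjoint hk (Kchild_mem hK (hG l hl)) (Kchild_mem hK (hG l' hl'))
    ((Kchild_injective hk hK).ne hne)

lemma Kfam.exists_subset_mid (hk : 1 ≤ k) {i i' : ℕ} (hii' : i < i') {K' : ℝ × ℝ}
    (hK' : K' ∈ Kfam k i') : ∃ K ∈ Kfam k i, ivSet K' ⊆ ivSet (mid K) := by
  induction i' generalizing K' with
  | zero => omega
  | succ i' ih =>
    obtain ⟨K₀, hK₀, l, hl, rfl⟩ := hK'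
    rcases (Nat.lt_succ_iff.1 hii').eq_or_lt with rfl | hlt
    · exact ⟨K₀, hK₀, Kchild_subset_mid hk hK₀ hl⟩
    · obtain ⟨K, hK, hsub⟩ := ih hlt hK₀
      exact ⟨K, hK, (Kchild_subset_mid hk hK₀ hl).trans
        ((mid_subset (Kfam.fst_lt_snd hk hK₀)).trans hsub)⟩

lemma Kfam.subset_mid_or_disjoint (hk : 1 ≤ k) {i i' : ℕ} (hii' : i < i') {K K' : ℝ × ℝ}
    (hK : K ∈ Kfam k i) (hK' : K' ∈ Kfam k i') :
    ivSet K' ⊆ ivSet (mid K) ∨ Disjoint (ivSet K') (ivSet K) := by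
  obtain ⟨K₀, hK₀, hsub⟩ := Kfam.exists_subset_mid hk hii' hK'
  rcases eq_or_ne K₀ K with rfl | hne
  · exact Or.inl hsub
  · exact Or.inr ((Kfam.disjoint hk hK₀ hK hne).mono_left
      (hsub.trans (mid_subset (Kfam.fst_lt_snd hk hK₀))))

lemma IJ_mid_eq (hk : 1 ≤ k) (ch : ℝ × ℝ → Bool) {i : ℕ} {K : ℝ × ℝ} (hK : K ∈ Kfam k i) :
    IJ k ch (mid K) = if ch (mid K) then ((mid K).2, (mid K).2 + levelLen k (i + 1))
      else ((mid K).1 - levelLen k (i + 1), (mid K).1) := by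
  rw [IJ, zpow_one_sub_mul_len_mid (Kfam.len_eq hk hK)]

lemma len_IJ_mid (hk : 1 ≤ k) (ch : ℝ × ℝ → Bool) {i : ℕ} {K : ℝ × ℝ} (hK : K ∈ Kfam k i) :
    len (IJ k ch (mid K)) = levelLen k (i + 1) := by
  rw [IJ_mid_eq hk ch hK]
  split_ifs <;> simp only [len] <;> ring

lemma IJ_mid_subset (hk : 1 ≤ k) (ch : ℝ × ℝ → Bool) {i : ℕ} {K : ℝ × ℝ} (hK : K ∈ Kfam k i) :
    ivSet (IJ k ch (mid K)) ⊆ ivSet K := by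
  have h := levelLen_succ_le_third hk i
  have h' := levelLen_pos k (i + 1)
  rw [IJ_mid_eq hk ch hK, Kfam.mid_eq hk hK]
  simp only [ivSet, Kfam.snd_eq hk hK]
  split_ifs <;> apply Ico_subset_Ico <;> linarith

lemma disjoint_IJ_mid (hk : 1 ≤ k) (ch : ℝ × ℝ → Bool) {i : ℕ} {K : ℝ × ℝ}
    (hK : K ∈ Kfam k i) : Disjoint (ivSet (IJ k ch (mid K))) (ivSet (mid K)) := by
  rw [IJ_mid_eq hk ch hK]
  split_ifs
  · exact (Ico_disjoint_Ico_same (c := (mid K).2 + levelLen k (i + 1))).symm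
  · exact Ico_disjoint_Ico_same

end Geometry

section Layers

open Function

lemma tsum_indicator_of_mem {ι α M : Type*} [AddCommMonoid M] [TopologicalSpace M]
    {t : ι → Set α} (ht : Pairwise (Disjoint on t)) (c : ι → M) {x : α} {i : ι} (hx : x ∈ t i) :
    ∑' j, (t j).indicator (fun _ => c j) x = c i := by
  rw [tsum_eq_single i fun j hj => indicator_of_notMem ((ht hj).symm.notMem_of_mem_left hx) _]
  exact indicator_of_mem hx _

lemma tsum_indicator_of_notMem {ι α M : Type*} [AddCommMonoid M] [TopologicalSpace M]
    {t : ι → Set α} (c : ι → M) {x : α} (hx : ∀ i, x ∉ t i) :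
    ∑' j, (t j).indicator (fun _ => c j) x = 0 := by
  simp [hx]

lemma tsum_indicator_const {ι α M : Type*} [AddCommMonoid M] [TopologicalSpace M]
    {t : ι → Set α} (ht : Pairwise (Disjoint on t)) (c : M) (x : α) :
    ∑' j, (t j).indicator (fun _ => c) x = (⋃ j, t j).indicator (fun _ => c) x := by
  by_cases hx : ∃ i, x ∈ t i
  · obtain ⟨i, hi⟩ := hx
    rw [tsum_indicator_of_mem ht (fun _ => c) hi, indicator_of_mem (mem_iUnion.2 ⟨i, hi⟩)]
  · push Not at hx
    rw [tsum_indicator_of_notMem (fun _ => c) hx, indicator_of_notMem (by simpa using hx)]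

variable {k : ℕ}

lemma Kfam_countable (k i : ℕ) : (Kfam k i).Countable := by
  induction i with
  | zero => exact countable_singleton _
  | succ i ih =>
    refine (ih.image2 countable_univ (Kchild k)).mono ?_
    rintro _ ⟨K, hK, l, -, rfl⟩
    exact mem_image2_of_mem hK (mem_univ l)

lemma Jfam_succ (k i : ℕ) : Jfam k (i + 1) = mid '' Kfam k i := by
  ext J
  simp [Jfam, eq_comm]

/-- The `i`-th layer of `w_k`: where it takes the value `wBase k ^ (i + 1)`. -/
def levelSupport (k : ℕ) (ch : ℝ × ℝ → Bool) (i : ℕ) : Set ℝ :=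
  ⋃ J : ↥(Jfam k (i + 1)), ivSet (IJ k ch J)

variable {ch : ℝ × ℝ → Bool}

lemma mem_levelSupport {i : ℕ} {x : ℝ} :
    x ∈ levelSupport k ch i ↔ ∃ K ∈ Kfam k i, x ∈ ivSet (IJ k ch (mid K)) := by
  simp only [levelSupport, mem_iUnion, Subtype.exists, Jfam_succ, exists_prop, mem_image]
  constructor
  · rintro ⟨_, ⟨K, hK, rfl⟩, hx⟩
    exact ⟨K, hK, hx⟩
  · rintro ⟨K, hK, hx⟩
    exact ⟨_, ⟨K, hK, rfl⟩, hx⟩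

lemma measurableSet_levelSupport (i : ℕ) : MeasurableSet (levelSupport k ch i) := by
  have : Countable ↥(Jfam k (i + 1)) := by
    rw [Jfam_succ]
    exact ((Kfam_countable k i).image mid).to_subtype
  exact MeasurableSet.iUnion fun _ => measurableSet_Ico

lemma pairwise_disjoint_IJ (hk : 1 ≤ k) (i : ℕ) :
    Pairwise (Disjoint on fun J : ↥(Jfam k (i + 1)) => ivSet (IJ k ch J)) := by
  rintro ⟨J, hJ⟩ ⟨J', hJ'⟩ hne
  rw [Jfam_succ] at hJ hJ'
  obtain ⟨K, hK, rfl⟩ := hJ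
  obtain ⟨K', hK', rfl⟩ := hJ'
  have hKK' : K ≠ K' := by rintro rfl; exact hne rfl
  exact (Kfam.disjoint hk hK hK' hKK').mono (IJ_mid_subset hk ch hK) (IJ_mid_subset hk ch hK')

lemma disjoint_levelSupport_of_lt (hk : 1 ≤ k) {i j : ℕ} (hij : i < j) {K : ℝ × ℝ}
    (hK : K ∈ Kfam k j) : Disjoint (levelSupport k ch i) (ivSet K) := by
  rw [disjoint_left]
  intro x hx hxK
  obtain ⟨K', hK', hx⟩ := mem_levelSupport.1 hx
  rcases Kfam.subset_mid_or_disjoint hk hij hK' hK with hsub | hdisj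
  · exact (disjoint_IJ_mid hk ch hK').notMem_of_mem_left hx (hsub hxK)
  · exact hdisj.notMem_of_mem_left hxK (IJ_mid_subset hk ch hK' hx)

lemma levelSupport_inter_self (hk : 1 ≤ k) {j : ℕ} {K : ℝ × ℝ} (hK : K ∈ Kfam k j) :
    levelSupport k ch j ∩ ivSet K = ivSet (IJ k ch (mid K)) := by
  refine Subset.antisymm ?_ fun x hx =>
    ⟨mem_levelSupport.2 ⟨K, hK, hx⟩, IJ_mid_subset hk ch hK hx⟩
  rintro x ⟨hx, hxK⟩
  obtain ⟨K', hK', hx⟩ := mem_levelSupport.1 hx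
  obtain rfl : K' = K := by
    by_contra hne
    exact (Kfam.disjoint hk hK' hK hne).notMem_of_mem_left (IJ_mid_subset hk ch hK' hx) hxK
  exact hx

lemma levelSupport_inter_subset_mid (hk : 1 ≤ k) {i j : ℕ} (hji : j < i) {K : ℝ × ℝ}
    (hK : K ∈ Kfam k j) : levelSupport k ch i ∩ ivSet K ⊆ ivSet (mid K) := by
  rintro x ⟨hx, hxK⟩
  obtain ⟨K', hK', hx⟩ := mem_levelSupport.1 hx
  rcases Kfam.subset_mid_or_disjoint hk hji hK hK' with hsub | hdisj
  · exact hsub (IJ_mid_subset hk ch hK' hx)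
  · exact absurd hxK (hdisj.notMem_of_mem_left (IJ_mid_subset hk ch hK' hx))

lemma pairwise_disjoint_levelSupport (hk : 1 ≤ k) : Pairwise (Disjoint on levelSupport k ch) := by
  refine (pairwise_disjoint_on _).2 fun i j hij => disjoint_right.2 fun x hx => ?_
  obtain ⟨K, hK, hx⟩ := mem_levelSupport.1 hx
  exact (disjoint_levelSupport_of_lt hk hij hK).notMem_of_mem_right (IJ_mid_subset hk ch hK hx)

end Layers

section LayerFunctions

variable {k : ℕ} {ch : ℝ × ℝ → Bool}

def wBase (k : ℕ) : ℝ := 3 ^ k / (3 ^ (k - 1) + 1)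

lemma wBase_pos (k : ℕ) : 0 < wBase k := by unfold wBase; positivity

lemma one_lt_wBase (hk : 1 ≤ k) : 1 < wBase k := by
  rw [wBase, one_lt_div (by positivity), three_pow_eq_three_mul hk]
  linarith [one_le_pow₀ (M₀ := ℝ) (a := 3) (n := k - 1) (by norm_num)]

lemma wBase_lt_three (hk : 1 ≤ k) : wBase k < 3 := by
  rw [wBase, div_lt_iff₀ (by positivity), three_pow_eq_three_mul hk]
  linarith

def layerFn (k : ℕ) (ch : ℝ × ℝ → Bool) (r : ℝ) (x : ℝ) : ℝ :=
  ∑' i, (levelSupport k ch i).indicator (fun _ => r ^ (i + 1)) x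

lemma layerFn_eq_of_mem (hk : 1 ≤ k) {r x : ℝ} {i : ℕ} (hx : x ∈ levelSupport k ch i) :
    layerFn k ch r x = r ^ (i + 1) :=
  tsum_indicator_of_mem (pairwise_disjoint_levelSupport hk) (fun i => r ^ (i + 1)) hx

lemma layerFn_eq_zero {r x : ℝ} (hx : ∀ i, x ∉ levelSupport k ch i) : layerFn k ch r x = 0 :=
  tsum_indicator_of_notMem _ hx

lemma wgt_eq_layerFn (hk : 1 ≤ k) : wgt k ch = layerFn k ch (wBase k) := by
  funext x
  exact tsum_congr fun i => tsum_indicator_const (pairwise_disjoint_IJ hk i) _ x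

lemma sgm_eq_layerFn (hk : 1 ≤ k) (p : ℝ) : sgm p k ch = layerFn k ch (wBase k ^ (1 - p)) := by
  funext x
  rw [sgm, wgt_eq_layerFn hk]
  by_cases hx : ∃ i, x ∈ levelSupport k ch i
  · obtain ⟨i, hi⟩ := hx
    rw [layerFn_eq_of_mem hk hi, layerFn_eq_of_mem hk hi, if_pos (pow_pos (wBase_pos k) _),
      ← Real.rpow_natCast, ← Real.rpow_natCast, ← Real.rpow_mul (wBase_pos k).le,
      ← Real.rpow_mul (wBase_pos k).le, mul_comm]
  · push Not at hx
    rw [layerFn_eq_zero hx, layerFn_eq_zero hx, if_neg (lt_irrefl 0)]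

lemma layerFn_nonneg (hk : 1 ≤ k) {r : ℝ} (hr : 0 ≤ r) (x : ℝ) : 0 ≤ layerFn k ch r x := by
  by_cases hx : ∃ i, x ∈ levelSupport k ch i
  · obtain ⟨i, hi⟩ := hx
    rw [layerFn_eq_of_mem hk hi]
    positivity
  · push Not at hx
    rw [layerFn_eq_zero hx]

lemma ofReal_layerFn (hk : 1 ≤ k) (r x : ℝ) :
    ENNReal.ofReal (layerFn k ch r x) =
      ∑' i, (levelSupport k ch i).indicator (fun _ => ENNReal.ofReal (r ^ (i + 1))) x := by
  by_cases hx : ∃ i, x ∈ levelSupport k ch i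
  · obtain ⟨i, hi⟩ := hx
    rw [layerFn_eq_of_mem hk hi,
      tsum_indicator_of_mem (pairwise_disjoint_levelSupport hk) (fun i => _) hi]
  · push Not at hx
    rw [layerFn_eq_zero hx, tsum_indicator_of_notMem _ hx, ENNReal.ofReal_zero]

lemma measurable_layerFn (r : ℝ) : Measurable (layerFn k ch r) :=
  Measurable.tsum fun i => measurable_const.indicator (measurableSet_levelSupport i)

lemma lintegral_layerFn (hk : 1 ≤ k) (r : ℝ) (A : Set ℝ) :
    ∫⁻ x in A, ENNReal.ofReal (layerFn k ch r x) =
      ∑' i, ENNReal.ofReal (r ^ (i + 1)) * volume (levelSupport k ch i ∩ A) := by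
  simp only [ofReal_layerFn hk]
  rw [lintegral_tsum fun i =>
    (measurable_const.indicator (measurableSet_levelSupport i)).aemeasurable]
  congr 1
  funext i
  rw [lintegral_indicator_const (measurableSet_levelSupport i),
    Measure.restrict_apply (measurableSet_levelSupport i)]

lemma mass_layerFn (hk : 1 ≤ k) {r : ℝ} (hr : 0 ≤ r) (I : ℝ × ℝ) :
    mass (layerFn k ch r) I = (∫⁻ x in ivSet I, ENNReal.ofReal (layerFn k ch r x)).toReal :=
  integral_eq_lintegral_of_nonneg_ae (.of_forall (layerFn_nonneg hk hr))
    (measurable_layerFn r).aestronglyMeasurable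

end LayerFunctions

section Masses

variable {k : ℕ} {ch : ℝ × ℝ → Bool}

lemma volume_levelSupport_inter_Kfam (hk : 1 ≤ k) (d : ℕ) {j : ℕ} {K : ℝ × ℝ}
    (hK : K ∈ Kfam k j) :
    volume (levelSupport k ch (j + d) ∩ ivSet K) = ENNReal.ofReal (levelLen k (j + 1) / 3 ^ d) := by
  induction d generalizing j K with
  | zero => simp [levelSupport_inter_self hk hK, volume_ivSet, len_IJ_mid hk ch hK]
  | succ d ih =>
    have hmid : levelSupport k ch (j + (d + 1)) ∩ ivSet K =
        levelSupport k ch (j + (d + 1)) ∩ ivSet (mid K) :=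
      Subset.antisymm (fun x hx => ⟨hx.1, levelSupport_inter_subset_mid hk (by omega) hK hx⟩)
        (inter_subset_inter_right _ (mid_subset (Kfam.fst_lt_snd hk hK)))
    have hchild : ∀ l ∈ Finset.range (3 ^ (k - 1)),
        volume (levelSupport k ch (j + (d + 1)) ∩ ivSet (Kchild k K l)) =
          ENNReal.ofReal (levelLen k (j + 2) / 3 ^ d) := fun l hl => by
      rw [show j + (d + 1) = j + 1 + d by omega]
      exact ih (Kchild_mem hK (Finset.mem_range.1 hl))
    rw [hmid, ivSet_mid_eq_biUnion_Kchild hk hK, inter_iUnion₂,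
      measure_biUnion_finset (fun l hl l' hl' hne =>
        ((pairwiseDisjoint_Kchild hk hK _ fun l hl => Finset.mem_range.1 hl) hl hl' hne).mono
          inter_subset_right inter_subset_right)
        fun l _ => (measurableSet_levelSupport _).inter measurableSet_Ico,
      Finset.sum_congr rfl hchild, Finset.sum_const, Finset.card_range, nsmul_eq_mul,
      ← ENNReal.ofReal_natCast, ← ENNReal.ofReal_mul (by positivity)]
    congr 1
    push_cast
    rw [mul_div_assoc', three_pow_pred_mul_levelLen_succ hk, pow_succ]
    ring

def layerDensity (k : ℕ) (r : ℝ) : ℝ := r * levelLen k 1 / (1 - r / 3)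

lemma layerDensity_nonneg {r : ℝ} (hr0 : 0 ≤ r) (hr3 : r < 3) : 0 ≤ layerDensity k r :=
  div_nonneg (mul_nonneg hr0 (levelLen_pos k 1).le) (by linarith)

lemma pow_mul_levelLen_mul_layerDensity_nonneg {r : ℝ} (hr0 : 0 ≤ r) (hr3 : r < 3) (j : ℕ) :
    0 ≤ r ^ j * levelLen k j * layerDensity k r :=
  mul_nonneg (mul_nonneg (pow_nonneg hr0 j) (levelLen_pos k j).le) (layerDensity_nonneg hr0 hr3)

lemma lintegral_layerFn_Kfam (hk : 1 ≤ k) {r : ℝ} (hr0 : 0 ≤ r) (hr3 : r < 3) {j : ℕ}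
    {K : ℝ × ℝ} (hK : K ∈ Kfam k j) :
    ∫⁻ x in ivSet K, ENNReal.ofReal (layerFn k ch r x) =
      ENNReal.ofReal (r ^ j * levelLen k j * layerDensity k r) := by
  have hq0 : 0 ≤ r / 3 := by positivity
  have hq1 : r / 3 < 1 := by linarith
  have hterm : ∀ d : ℕ, ENNReal.ofReal (r ^ (d + j + 1)) *
      volume (levelSupport k ch (d + j) ∩ ivSet K) =
        ENNReal.ofReal (r ^ (j + 1) * levelLen k (j + 1) * (r / 3) ^ d) := fun d => by
    rw [add_comm d j, volume_levelSupport_inter_Kfam hk d hK, ← ENNReal.ofReal_mul (by positivity)]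
    congr 1
    rw [div_pow]
    field_simp
    ring
  rw [lintegral_layerFn hk, ← ENNReal.summable.sum_add_tsum_nat_add' (k := j),
    Finset.sum_eq_zero fun i hi => by
      rw [(disjoint_levelSupport_of_lt hk (Finset.mem_range.1 hi) hK).inter_eq, measure_empty,
        mul_zero],
    zero_add, tsum_congr hterm, ← ENNReal.ofReal_tsum_of_nonneg (fun d =>
      mul_nonneg (mul_nonneg (by positivity) (levelLen_pos k (j + 1)).le) (by positivity))
      ((summable_geometric_of_lt_one hq0 hq1).mul_left _),
    tsum_mul_left, tsum_geometric_of_lt_one hq0 hq1, layerDensity, levelLen_succ]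
  congr 1
  field_simp
  ring

lemma mass_layerFn_Kfam (hk : 1 ≤ k) {r : ℝ} (hr0 : 0 ≤ r) (hr3 : r < 3) {j : ℕ}
    {K : ℝ × ℝ} (hK : K ∈ Kfam k j) :
    mass (layerFn k ch r) K = r ^ j * levelLen k j * layerDensity k r := by
  rw [mass_layerFn hk hr0, lintegral_layerFn_Kfam hk hr0 hr3 hK,
    ENNReal.toReal_ofReal (pow_mul_levelLen_mul_layerDensity_nonneg hr0 hr3 j)]

lemma avg_layerFn_Kfam (hk : 1 ≤ k) {r : ℝ} (hr0 : 0 ≤ r) (hr3 : r < 3) {j : ℕ}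
    {K : ℝ × ℝ} (hK : K ∈ Kfam k j) :
    avg (layerFn k ch r) K = r ^ j * layerDensity k r := by
  rw [avg, mass_layerFn_Kfam hk hr0 hr3 hK, Kfam.len_eq hk hK]
  field_simp [(levelLen_pos k j).ne']

lemma avg_layerFn_of_eq_biUnion_Kchild (hk : 1 ≤ k) {r : ℝ} (hr0 : 0 ≤ r) (hr3 : r < 3)
    {j : ℕ} {K : ℝ × ℝ} (hK : K ∈ Kfam k j) {G : Finset ℕ} (hG : G.Nonempty)
    (hGk : ∀ l ∈ G, l < 3 ^ (k - 1)) {I : ℝ × ℝ}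
    (hI : ivSet I = ⋃ l ∈ G, ivSet (Kchild k K l)) :
    avg (layerFn k ch r) I = r ^ (j + 1) * layerDensity k r := by
  have hdisj := pairwiseDisjoint_Kchild hk hK G hGk
  have hcard : (0 : ℝ) < G.card := by exact_mod_cast hG.card_pos
  have hlen : len I = G.card * levelLen k (j + 1) := by
    have hvol := volume_ivSet I
    rw [hI, measure_biUnion_finset hdisj fun _ _ => measurableSet_Ico,
      Finset.sum_congr rfl fun l hl => by
        rw [volume_ivSet, Kfam.len_eq hk (Kchild_mem hK (hGk l hl))],
      Finset.sum_const, nsmul_eq_mul, ← ENNReal.ofReal_natCast,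
      ← ENNReal.ofReal_mul (Nat.cast_nonneg _)] at hvol
    have hne : (ivSet I).Nonempty := by
      obtain ⟨l, hl⟩ := hG
      rw [hI]
      exact (ivSet_nonempty (Kfam.fst_lt_snd hk (Kchild_mem hK (hGk l hl)))).mono
        (subset_biUnion_of_mem (u := fun l => ivSet (Kchild k K l)) hl)
    have hlen0 : 0 ≤ len I := (len_pos (nonempty_Ico.1 hne)).le
    exact ((ENNReal.ofReal_eq_ofReal_iff (mul_pos hcard (levelLen_pos _ _)).le hlen0).1 hvol).symm
  have hmass : mass (layerFn k ch r) I =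
      G.card * (r ^ (j + 1) * levelLen k (j + 1) * layerDensity k r) := by
    rw [mass_layerFn hk hr0, hI, lintegral_biUnion_finset hdisj fun _ _ => measurableSet_Ico,
      Finset.sum_congr rfl fun l hl => lintegral_layerFn_Kfam hk hr0 hr3 (Kchild_mem hK (hGk l hl)),
      Finset.sum_const, nsmul_eq_mul, ← ENNReal.ofReal_natCast,
      ← ENNReal.ofReal_mul (Nat.cast_nonneg _),
      ENNReal.toReal_ofReal
        (mul_nonneg hcard.le (pow_mul_levelLen_mul_layerDensity_nonneg hr0 hr3 _))]
  rw [avg, hmass, hlen]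
  field_simp [(levelLen_pos k (j + 1)).ne']

lemma mass_layerFn_of_subset_of_disjoint_mid (hk : 1 ≤ k) {r : ℝ} (hr0 : 0 ≤ r) {j : ℕ}
    {K I : ℝ × ℝ} (hK : K ∈ Kfam k j) (hIK : ivSet I ⊆ ivSet K)
    (hImid : Disjoint (ivSet I) (ivSet (mid K))) (hIJ : ivSet (IJ k ch (mid K)) ⊆ ivSet I) :
    mass (layerFn k ch r) I = r ^ (j + 1) * levelLen k (j + 1) := by
  rw [mass_layerFn hk hr0, lintegral_layerFn hk, tsum_eq_single j fun i hij => ?_]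
  · rw [← inter_eq_self_of_subset_right hIK, ← inter_assoc, levelSupport_inter_self hk hK,
      inter_eq_self_of_subset_left hIJ, volume_ivSet,
      len_IJ_mid hk ch hK, ← ENNReal.ofReal_mul (by positivity), ENNReal.toReal_ofReal]
    have := levelLen_pos k (j + 1)
    positivity
  · suffices levelSupport k ch i ∩ ivSet I = ∅ by rw [this, measure_empty, mul_zero]
    rcases hij.lt_or_gt with h | h
    · exact ((disjoint_levelSupport_of_lt hk h hK).mono_right hIK).inter_eq
    · refine eq_empty_of_subset_empty fun x hx => hImid.notMem_of_mem_left hx.2 ?_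
      exact levelSupport_inter_subset_mid hk h hK ⟨hx.1, hIK hx.2⟩

end Masses

section Sparse

variable {ε : ℝ} {S : Set (ℝ × ℝ)}

def sparsePart (S : Set (ℝ × ℝ)) (R : ℝ × ℝ) : Set ℝ :=
  ivSet R \ ⋃ Q ∈ maxIn S R, ivSet Q

lemma measurableSet_sparsePart (hS : S.Countable) (R : ℝ × ℝ) : MeasurableSet (sparsePart S R) :=
  measurableSet_Ico.diff
    (MeasurableSet.biUnion (hS.mono fun _ hQ => hQ.1) fun _ _ => measurableSet_Ico)

lemma exists_maxIn_superset (htri : ∀ I ∈ S, IsTriadic I ∧ ivSet I ⊆ Ico 0 1) {Q R : ℝ × ℝ}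
    (hQ : Q ∈ S) (hQR : ivSet Q ⊂ ivSet R) : ∃ Q' ∈ maxIn S R, ivSet Q ⊆ ivSet Q' := by
  classical
  -- the lengths are `3^(-n)` with `n ∈ ℕ`, so some member between `Q` and `R` is longest
  have scale : ∀ I ∈ S, ∃ n : ℕ, IsTriadicAt n I := fun I hI => by
    obtain ⟨n, hn⟩ := (htri I hI).1
    have hn : IsTriadicAt n I := hn
    exact ⟨n.toNat, by rwa [Int.toNat_of_nonneg (hn.nonneg_of_subset (htri I hI).2)]⟩
  have hex : ∃ n : ℕ, ∃ Q' ∈ S, IsTriadicAt n Q' ∧ ivSet Q ⊆ ivSet Q' ∧ ivSet Q' ⊂ ivSet R := by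
    obtain ⟨n, hn⟩ := scale Q hQ
    exact ⟨n, Q, hQ, hn, subset_rfl, hQR⟩
  obtain ⟨Q', hQ'S, hQ'n, hQQ', hQ'R⟩ := Nat.find_spec hex
  refine ⟨Q', ⟨hQ'S, hQ'R, fun Q'' hQ''S hsub hQ''R => ?_⟩, hQQ'⟩
  obtain ⟨m, hm⟩ := scale Q'' hQ''S
  have hle : Nat.find hex ≤ m := Nat.find_min' hex ⟨Q'', hQ''S, hm, hQQ'.trans hsub, hQ''R⟩
  refine ivSet_eq_of_subset_of_len_le hQ'n.fst_lt_snd hsub ?_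
  rw [hm.len_eq, hQ'n.len_eq]
  exact zpow_le_zpow_right₀ (by norm_num) (by omega)

namespace MSparse

lemma pairwiseDisjoint_maxIn (hS : MSparse ε S) (R : ℝ × ℝ) :
    (maxIn S R).PairwiseDisjoint ivSet := by
  rintro Q ⟨hQS, hQR, hQmax⟩ Q' ⟨hQ'S, hQ'R, hQ'max⟩ hne
  rcases hS.2.2.1 Q hQS Q' hQ'S with h | h | h
  · exact absurd (eq_of_ivSet_eq (hS.2.1 Q' hQ'S) (hQmax Q' hQ'S h hQ'R)) hne.symm
  · exact absurd (eq_of_ivSet_eq (hS.2.1 Q hQS) (hQ'max Q hQS h hQR)) hne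
  · exact disjoint_iff_inter_eq_empty.2 h

lemma volume_biUnion_maxIn_le (hS : MSparse ε S) {R : ℝ × ℝ} (hR : R ∈ S) :
    volume (⋃ Q ∈ maxIn S R, ivSet Q) ≤ ENNReal.ofReal (ε * len R) := by
  have hvol : volume (⋃ Q ∈ maxIn S R, ivSet Q) = ∑' Q : ↥(maxIn S R), ENNReal.ofReal (len Q) := by
    rw [measure_biUnion (hS.1.mono fun Q hQ => hQ.1) (hS.pairwiseDisjoint_maxIn R)
      fun _ _ => measurableSet_Ico]
    simp only [volume_ivSet]
  have hfin : ∑' Q : ↥(maxIn S R), ENNReal.ofReal (len Q) ≠ ⊤ := by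
    rw [← hvol]
    refine ne_top_of_le_ne_top (ENNReal.ofReal_ne_top (r := len R)) ?_
    rw [← volume_ivSet]
    exact measure_mono (iUnion₂_subset fun Q hQ => hQ.2.1.subset)
  have hlen : ∀ Q : ↥(maxIn S R), 0 ≤ len Q := fun Q => (len_pos (hS.2.1 _ Q.2.1)).le
  rw [hvol, ← ENNReal.ofReal_tsum_of_nonneg hlen ((ENNReal.summable_toReal hfin).congr
    fun Q => ENNReal.toReal_ofReal (hlen Q))]
  exact ENNReal.ofReal_le_ofReal (hS.2.2.2 R hR)

lemma ofReal_le_volume_sparsePart (hS : MSparse ε S) (hε : 0 ≤ ε) {R : ℝ × ℝ} (hR : R ∈ S) :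
    ENNReal.ofReal ((1 - ε) * len R) ≤ volume (sparsePart S R) := by
  have hlen := (len_pos (hS.2.1 R hR)).le
  calc ENNReal.ofReal ((1 - ε) * len R)
      = volume (ivSet R) - ENNReal.ofReal (ε * len R) := by
        rw [volume_ivSet, ← ENNReal.ofReal_sub _ (mul_nonneg hε hlen)]
        ring_nf
    _ ≤ volume (ivSet R) - volume (⋃ Q ∈ maxIn S R, ivSet Q) :=
        tsub_le_tsub_left (hS.volume_biUnion_maxIn_le hR) _
    _ ≤ volume (sparsePart S R) := le_measure_sdiff

lemma disjoint_sparsePart (hS : MSparse ε S) (htri : ∀ I ∈ S, IsTriadic I ∧ ivSet I ⊆ Ico 0 1)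
    {I I' : ℝ × ℝ} (hI : I ∈ S) (hI' : I' ∈ S) (hne : I ≠ I') :
    Disjoint (sparsePart S I) (sparsePart S I') := by
  have nested : ∀ {A B : ℝ × ℝ}, A ∈ S → B ∈ S → A ≠ B → ivSet A ⊆ ivSet B →
      Disjoint (sparsePart S A) (sparsePart S B) := fun {A B} hA hB hAB hsub => by
    have hss : ivSet A ⊂ ivSet B :=
      ⟨hsub, fun h => hAB (eq_of_ivSet_eq (hS.2.1 A hA) (Subset.antisymm hsub h))⟩
    obtain ⟨Q, hQ, hAQ⟩ := exists_maxIn_superset htri hA hss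
    rw [disjoint_left]
    exact fun x hxA hxB => hxB.2 (mem_biUnion hQ (hAQ hxA.1))
  rcases hS.2.2.1 I hI I' hI' with h | h | h
  · exact nested hI hI' hne h
  · exact (nested hI' hI hne.symm h).symm
  · exact (disjoint_iff_inter_eq_empty.2 h).mono sdiff_subset sdiff_subset

theorem one_sub_mul_sum_len_le (hS : MSparse ε S) (hε0 : 0 ≤ ε) (hε1 : ε ≤ 1)
    (htri : ∀ I ∈ S, IsTriadic I ∧ ivSet I ⊆ Ico 0 1) {F : Finset (ℝ × ℝ)} (hFS : ↑F ⊆ S)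
    {J : ℝ × ℝ} (hJ : J.1 ≤ J.2) (hFJ : ∀ I ∈ F, ivSet I ⊆ ivSet J) :
    (1 - ε) * ∑ I ∈ F, len I ≤ len J := by
  have hterm : ∀ I ∈ F, 0 ≤ (1 - ε) * len I := fun I hI =>
    mul_nonneg (by linarith) (len_pos (hS.2.1 I (hFS hI))).le
  rw [← ENNReal.ofReal_le_ofReal_iff (show 0 ≤ len J from sub_nonneg.2 hJ), Finset.mul_sum,
    ENNReal.ofReal_sum_of_nonneg hterm, ← volume_ivSet]
  calc ∑ I ∈ F, ENNReal.ofReal ((1 - ε) * len I)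
      ≤ ∑ I ∈ F, volume (sparsePart S I) :=
        Finset.sum_le_sum fun I hI => hS.ofReal_le_volume_sparsePart hε0 (hFS hI)
    _ = volume (⋃ I ∈ F, sparsePart S I) :=
        (measure_biUnion_finset (fun I hI I' hI' hne =>
          hS.disjoint_sparsePart htri (hFS hI) (hFS hI') hne) fun I _ =>
          measurableSet_sparsePart hS.1 I).symm
    _ ≤ volume (ivSet J) := measure_mono (iUnion₂_subset fun I hI => sdiff_subset.trans (hFJ I hI))

end MSparse

end Sparse

section Families

variable {k : ℕ} {ch : ℝ × ℝ → Bool}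

/-- The family `𝒮¹_K`. -/
def firstFamily (k : ℕ) (S : Set (ℝ × ℝ)) (K : ℝ × ℝ) : Set (ℝ × ℝ) :=
  {I | I ∈ S ∧ (I = K ∨ (ivSet I ⊆ ivSet (mid K) ∧ ∀ K' ∈ chK k K, ¬ ivSet I ⊆ ivSet K'))}

/-- The family `𝒮²_K`, where `SJ` is the triadic child of `K` containing `I(K^m)`. -/
def secondFamily (k : ℕ) (ch : ℝ × ℝ → Bool) (S : Set (ℝ × ℝ)) (K SJ : ℝ × ℝ) :
    Set (ℝ × ℝ) :=
  {I | I ∈ S ∧ ivSet (IJ k ch (mid K)) ⊂ ivSet I ∧ ivSet I ⊆ ivSet SJ}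

lemma eq_biUnion_Kchild_of_subset_mid (hk : 1 ≤ k) {j : ℕ} {K I : ℝ × ℝ} (hK : K ∈ Kfam k j)
    (hI : IsTriadic I) (hImid : ivSet I ⊆ ivSet (mid K))
    (hnot : ∀ K' ∈ chK k K, ¬ ivSet I ⊆ ivSet K') :
    ∃ G : Finset ℕ, G.Nonempty ∧ (∀ l ∈ G, l < 3 ^ (k - 1)) ∧
      ivSet I = ⋃ l ∈ G, ivSet (Kchild k K l) := by
  classical
  obtain ⟨n, hn⟩ := hI
  have hn : IsTriadicAt n I := hn
  have hchild : ∀ l < 3 ^ (k - 1), IsTriadicAt (((j + 1) * k : ℕ) : ℤ) (Kchild k K l) :=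
    fun l hl => Kfam.isTriadicAt hk (Kchild_mem hK hl)
  have hmem : ∀ x ∈ ivSet I, ∃ l < 3 ^ (k - 1), x ∈ ivSet (Kchild k K l) := fun x hx => by
    have := hImid hx
    rw [ivSet_mid_eq_biUnion_Kchild hk hK] at this
    simpa using this
  obtain ⟨l₀, hl₀, hx₀⟩ := hmem I.1 (left_mem_Ico.2 hn.fst_lt_snd)
  have hscale : n ≤ (((j + 1) * k : ℕ) : ℤ) := by
    by_contra! hlt
    rcases (hchild l₀ hl₀).subset_or_disjoint hn hlt.le with hsub | hdisj
    · exact hnot _ (Kchild_mem_chK hk hK hl₀) hsub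
    · exact hdisj.notMem_of_mem_left (left_mem_Ico.2 hn.fst_lt_snd) hx₀
  have hcases : ∀ l < 3 ^ (k - 1),
      ivSet (Kchild k K l) ⊆ ivSet I ∨ Disjoint (ivSet (Kchild k K l)) (ivSet I) :=
    fun l hl => hn.subset_or_disjoint (hchild l hl) hscale
  refine ⟨(Finset.range (3 ^ (k - 1))).filter fun l => ivSet (Kchild k K l) ⊆ ivSet I,
    ⟨l₀, ?_⟩, fun l hl => Finset.mem_range.1 (Finset.mem_filter.1 hl).1, ?_⟩
  · refine Finset.mem_filter.2 ⟨Finset.mem_range.2 hl₀, ?_⟩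
    exact (hcases l₀ hl₀).resolve_right fun h =>
      h.notMem_of_mem_left hx₀ (left_mem_Ico.2 hn.fst_lt_snd)
  · refine Subset.antisymm (fun x hx => ?_) (iUnion₂_subset fun l hl => (Finset.mem_filter.1 hl).2)
    obtain ⟨l, hl, hxl⟩ := hmem x hx
    refine mem_biUnion (Finset.mem_filter.2 ⟨Finset.mem_range.2 hl, ?_⟩) hxl
    exact (hcases l hl).resolve_right fun h => h.notMem_of_mem_left hxl hx

lemma avg_layerFn_of_mem_firstFamily (hk : 1 ≤ k) {r : ℝ} (hr0 : 0 ≤ r) (hr3 : r < 3)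
    {S : Set (ℝ × ℝ)} (htri : ∀ I ∈ S, IsTriadic I) {j : ℕ} {K I : ℝ × ℝ} (hK : K ∈ Kfam k j)
    (hI : I ∈ firstFamily k S K) (hIK : I ≠ K) :
    avg (layerFn k ch r) I = r ^ (j + 1) * layerDensity k r := by
  obtain ⟨hIS, rfl | ⟨hImid, hnot⟩⟩ := hI
  · exact absurd rfl hIK
  obtain ⟨G, hG, hGk, hIG⟩ := eq_biUnion_Kchild_of_subset_mid hk hK (htri I hIS) hImid hnot
  exact avg_layerFn_of_eq_biUnion_Kchild hk hr0 hr3 hK hG hGk hIG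

lemma IJ_mid_isTriadicAt (hk : 1 ≤ k) (ch : ℝ × ℝ → Bool) {j : ℕ} {K : ℝ × ℝ}
    (hK : K ∈ Kfam k j) : IsTriadicAt (((j + 1) * k : ℕ) : ℤ) (IJ k ch (mid K)) := by
  obtain ⟨i, h1, -⟩ := Kfam.isTriadicAt hk hK
  change K.1 = i * levelLen k j at h1
  have hs : levelLen k j = 3 * 3 ^ (k - 1) * levelLen k (j + 1) := by
    rw [mul_assoc, three_pow_pred_mul_levelLen_succ hk]
    ring
  have h3 : (3 : ℝ) ^ k = 3 * 3 ^ (k - 1) := three_pow_eq_three_mul hk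
  rw [IJ_mid_eq hk ch hK, Kfam.mid_eq hk hK, h1, hs]
  split_ifs
  · refine ⟨i * 3 ^ k + 2 * 3 ^ (k - 1), ?_, ?_⟩ <;>
    · change _ = _ * levelLen k (j + 1)
      push_cast
      rw [h3]
      ring
  · refine ⟨i * 3 ^ k + 3 ^ (k - 1) - 1, ?_, ?_⟩ <;>
    · change _ = _ * levelLen k (j + 1)
      push_cast
      rw [h3]
      ring

lemma exists_scale_of_IJ_ssubset (hk : 1 ≤ k) {j : ℕ} {K I : ℝ × ℝ} (hK : K ∈ Kfam k j)
    (hI : IsTriadic I) (hIJI : ivSet (IJ k ch (mid K)) ⊂ ivSet I) :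
    ∃ m : ℕ, 1 ≤ m ∧ IsTriadicAt ((((j + 1) * k : ℕ) : ℤ) - m) I := by
  obtain ⟨n, hn⟩ := hI
  have hn : IsTriadicAt n I := hn
  have hIJ := IJ_mid_isTriadicAt hk ch hK
  have hlt : n < (((j + 1) * k : ℕ) : ℤ) := by
    by_contra! hle
    rcases hIJ.subset_or_disjoint hn hle with hsub | hdisj
    · exact hIJI.2 hsub
    · obtain ⟨x, hx⟩ := ivSet_nonempty hIJ.fst_lt_snd
      exact hdisj.notMem_of_mem_right hx (hIJI.1 hx)
  exact ⟨((((j + 1) * k : ℕ) : ℤ) - n).toNat, by omega, by rwa [Int.toNat_of_nonneg (by omega),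
    sub_sub_cancel]⟩

lemma IsTriadicAt.len_eq_pow_mul_levelLen {j m : ℕ} {I : ℝ × ℝ}
    (hI : IsTriadicAt ((((j + 1) * k : ℕ) : ℤ) - m) I) : len I = 3 ^ m * levelLen k (j + 1) := by
  rw [hI.len_eq, levelLen, neg_sub, zpow_sub₀ three_ne_zero, zpow_natCast, zpow_neg]
  ring

lemma avg_layerFn_of_IJ_subset (hk : 1 ≤ k) {r : ℝ} (hr0 : 0 ≤ r) {j m : ℕ} {K I : ℝ × ℝ}
    (hK : K ∈ Kfam k j) (hI : IsTriadicAt ((((j + 1) * k : ℕ) : ℤ) - m) I)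
    (hIK : ivSet I ⊆ ivSet K) (hImid : Disjoint (ivSet I) (ivSet (mid K)))
    (hIJ : ivSet (IJ k ch (mid K)) ⊆ ivSet I) :
    avg (layerFn k ch r) I = r ^ (j + 1) * ((3 : ℝ) ^ m)⁻¹ := by
  rw [avg, mass_layerFn_of_subset_of_disjoint_mid hk hr0 hK hIK hImid hIJ,
    hI.len_eq_pow_mul_levelLen]
  field_simp [(levelLen_pos k (j + 1)).ne']

lemma subset_disjoint_mid_of_IJ_subset_third (hk : 1 ≤ k) {j : ℕ} {K SJ : ℝ × ℝ}
    (hK : K ∈ Kfam k j)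
    (hSJ : SJ = (K.1, K.1 + len K / 3) ∨ SJ = mid K ∨ SJ = (K.2 - len K / 3, K.2))
    (hIJ : ivSet (IJ k ch (mid K)) ⊆ ivSet SJ) :
    ivSet SJ ⊆ ivSet K ∧ Disjoint (ivSet SJ) (ivSet (mid K)) := by
  have hlt := Kfam.fst_lt_snd hk hK
  rcases hSJ with rfl | rfl | rfl
  · refine ⟨Ico_subset_Ico le_rfl ?_, Ico_disjoint_Ico_same⟩
    simp only [len]
    linarith
  · obtain ⟨x, hx⟩ := ivSet_nonempty (IJ_mid_isTriadicAt hk ch hK).fst_lt_snd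
    exact absurd (hIJ hx) ((disjoint_IJ_mid hk ch hK).notMem_of_mem_left hx)
  · refine ⟨Ico_subset_Ico ?_ le_rfl, ?_⟩
    · simp only [len]
      linarith
    · have : (mid K).2 = K.2 - len K / 3 := by simp only [mid, len]
      rw [ivSet, ivSet, this]
      exact Ico_disjoint_Ico_same.symm

end Families

section TestSums

variable {k : ℕ} {ch : ℝ × ℝ → Bool}

lemma sumTest_le_of_forall_finset {q B : ℝ} {u v : ℝ → ℝ} {F : Set (ℝ × ℝ)} (hB : 0 ≤ B)
    (h : ∀ s : Finset (ℝ × ℝ), ↑s ⊆ F → ∑ I ∈ s, avg u I ^ q * avg v I * len I ≤ B) :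
    sumTest q u v F ≤ B := by
  refine tsum_le_of_sum_le' hB fun t => ?_
  have := h (t.image Subtype.val) fun I hI => by
    obtain ⟨x, -, rfl⟩ := Finset.mem_image.1 (Finset.mem_coe.1 hI)
    exact x.2
  rwa [Finset.sum_image fun x _ y _ h => Subtype.ext h] at this

lemma testTerm_eq {r A B q : ℝ} (hr : 0 < r) (hA : 0 ≤ A) (n : ℕ) (L : ℝ) :
    (r ^ n * A) ^ q * ((r ^ (1 - q)) ^ n * B) * L = A ^ q * B * (r ^ n * L) := by
  have hpow : (r ^ n) ^ q * (r ^ (1 - q)) ^ n = r ^ n := by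
    rw [← Real.rpow_natCast, ← Real.rpow_natCast, ← Real.rpow_mul hr.le, ← Real.rpow_mul hr.le,
      ← Real.rpow_add hr]
    ring_nf
  rw [Real.mul_rpow (by positivity) hA]
  linear_combination A ^ q * B * L * hpow

lemma inv_pow_rpow {x : ℝ} (hx : 0 ≤ x) (m : ℕ) (q : ℝ) : ((x ^ m)⁻¹) ^ q = (x ^ (-q)) ^ m := by
  rw [← inv_pow, ← Real.rpow_natCast, ← Real.rpow_mul (inv_nonneg.2 hx), mul_comm,
    Real.rpow_mul (inv_nonneg.2 hx), Real.rpow_natCast, Real.inv_rpow hx, Real.rpow_neg hx]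

lemma sum_pow_le_half {ι : Type*} {s : Finset ι} {m : ι → ℕ} (hm : Set.InjOn m s)
    (hm1 : ∀ i ∈ s, 1 ≤ m i) {x : ℝ} (hx0 : 0 ≤ x) (hx : x ≤ 1 / 3) :
    ∑ i ∈ s, x ^ m i ≤ 1 / 2 := by
  classical
  have hx1 : x < 1 := by linarith
  have h0 : 0 ∉ s.image m := fun h => by
    obtain ⟨i, hi, hi0⟩ := Finset.mem_image.1 h
    exact absurd (hm1 i hi) (by omega)
  have htsum : ∑ n ∈ insert 0 (s.image m), x ^ n ≤ (1 - x)⁻¹ := by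
    rw [← tsum_geometric_of_lt_one hx0 hx1]
    exact Summable.sum_le_tsum _ (fun n _ => pow_nonneg hx0 n)
      (summable_geometric_of_lt_one hx0 hx1)
  rw [Finset.sum_insert h0, pow_zero] at htsum
  rw [← Finset.sum_image hm]
  have : (1 - x)⁻¹ ≤ 3 / 2 := by
    rw [inv_le_comm₀ (by linarith) (by norm_num)]
    linarith
  linarith

lemma testTerm_Kfam (hk : 1 ≤ k) {r q : ℝ} (hr0 : 0 < r) (hr3 : r < 3) (hr'3 : r ^ (1 - q) < 3)
    {j : ℕ} {K : ℝ × ℝ} (hK : K ∈ Kfam k j) :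
    avg (layerFn k ch r) K ^ q * avg (layerFn k ch (r ^ (1 - q))) K * len K =
      layerDensity k r ^ q * layerDensity k (r ^ (1 - q)) * (r ^ j * levelLen k j) := by
  rw [avg_layerFn_Kfam hk hr0.le hr3 hK, avg_layerFn_Kfam hk (by positivity) hr'3 hK,
    Kfam.len_eq hk hK, testTerm_eq hr0 (layerDensity_nonneg hr0.le hr3)]

lemma testTerm_of_mem_firstFamily (hk : 1 ≤ k) {r q : ℝ} (hr0 : 0 < r) (hr3 : r < 3)
    (hr'3 : r ^ (1 - q) < 3) {S : Set (ℝ × ℝ)} (htri : ∀ I ∈ S, IsTriadic I) {j : ℕ}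
    {K I : ℝ × ℝ} (hK : K ∈ Kfam k j) (hI : I ∈ firstFamily k S K) (hIK : I ≠ K) :
    avg (layerFn k ch r) I ^ q * avg (layerFn k ch (r ^ (1 - q))) I * len I =
      layerDensity k r ^ q * layerDensity k (r ^ (1 - q)) * (r ^ (j + 1) * len I) := by
  rw [avg_layerFn_of_mem_firstFamily hk hr0.le hr3 htri hK hI hIK,
    avg_layerFn_of_mem_firstFamily hk (by positivity) hr'3 htri hK hI hIK,
    testTerm_eq hr0 (layerDensity_nonneg hr0.le hr3)]

lemma MSparse.one_sub_mul_sum_len_erase_le {ε : ℝ} {S : Set (ℝ × ℝ)} (hS : MSparse ε S)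
    (hε0 : 0 ≤ ε) (hε1 : ε < 1) (htri : ∀ I ∈ S, IsTriadic I ∧ ivSet I ⊆ Ico 0 1) (hk : 1 ≤ k)
    {j : ℕ} {K : ℝ × ℝ} (hK : K ∈ Kfam k j) {s : Finset (ℝ × ℝ)} (hs : ↑s ⊆ firstFamily k S K) :
    (1 - ε) * ∑ I ∈ s.erase K, len I ≤ levelLen k j / 3 := by
  rw [← Kfam.len_eq hk hK, ← len_mid]
  refine hS.one_sub_mul_sum_len_le hε0 hε1.le htri
    (fun I hI => (hs (Finset.mem_of_mem_erase hI)).1) ?_ fun I hI => ?_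
  · simp only [mid]
    linarith [Kfam.fst_lt_snd hk hK]
  · obtain ⟨-, rfl | ⟨hImid, -⟩⟩ := hs (Finset.mem_of_mem_erase hI)
    · exact absurd rfl (Finset.ne_of_mem_erase hI)
    · exact hImid

theorem sumTest_firstFamily_le (hk : 1 ≤ k) {r q ε : ℝ} (hr0 : 0 < r) (hr3 : r < 3)
    (hr'3 : r ^ (1 - q) < 3) (hε0 : 0 ≤ ε) (hε1 : ε < 1) {S : Set (ℝ × ℝ)} (hS : MSparse ε S)
    (htri : ∀ I ∈ S, IsTriadic I ∧ ivSet I ⊆ Ico 0 1) {j : ℕ} {K : ℝ × ℝ} (hK : K ∈ Kfam k j) :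
    sumTest q (layerFn k ch r) (layerFn k ch (r ^ (1 - q))) (firstFamily k S K) ≤
      2 * (layerDensity k r ^ q * layerDensity k (r ^ (1 - q))) * (r ^ j * levelLen k j) /
        (1 - ε) := by
  set D := layerDensity k r ^ q * layerDensity k (r ^ (1 - q))
  have hD : 0 ≤ D := mul_nonneg (Real.rpow_nonneg (layerDensity_nonneg hr0.le hr3) _)
    (layerDensity_nonneg (by positivity) hr'3)
  have hX : 0 ≤ D * r ^ j := mul_nonneg hD (by positivity)
  have hL := levelLen_pos k j
  refine sumTest_le_of_forall_finset
    (div_nonneg (by rw [mul_assoc, ← mul_assoc D]; positivity) (by linarith)) fun s hs => ?_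
  have hpack := hS.one_sub_mul_sum_len_erase_le hε0 hε1 htri hk hK hs
  have hlen : 0 ≤ ∑ I ∈ s.erase K, len I := Finset.sum_nonneg fun I hI =>
    (len_pos (hS.2.1 I (hs (Finset.mem_of_mem_erase hI)).1)).le
  calc ∑ I ∈ s, avg (layerFn k ch r) I ^ q * avg (layerFn k ch (r ^ (1 - q))) I * len I
      ≤ ∑ I ∈ insert K (s.erase K),
          avg (layerFn k ch r) I ^ q * avg (layerFn k ch (r ^ (1 - q))) I * len I :=
        Finset.sum_le_sum_of_subset_of_nonneg (Finset.insert_erase_subset K s) fun I hI hIs => by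
          obtain rfl : I = K := by simpa [hIs] using hI
          rw [testTerm_Kfam hk hr0 hr3 hr'3 hK]
          positivity
    _ = D * r ^ j * levelLen k j + D * r ^ j * r * ∑ I ∈ s.erase K, len I := by
        rw [Finset.sum_insert (Finset.notMem_erase K s), testTerm_Kfam hk hr0 hr3 hr'3 hK,
          Finset.sum_congr rfl fun I hI => testTerm_of_mem_firstFamily hk hr0 hr3 hr'3
            (fun I hI => (htri I hI).1) hK (hs (Finset.mem_of_mem_erase hI))
            (Finset.ne_of_mem_erase hI), ← Finset.mul_sum, ← Finset.mul_sum, pow_succ]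
        ring
    _ ≤ 2 * D * (r ^ j * levelLen k j) / (1 - ε) := by
        rw [le_div_iff₀ (by linarith)]
        nlinarith [mul_le_mul_of_nonneg_left hpack (mul_nonneg hX hr0.le),
          mul_nonneg hX (mul_nonneg hε0 hL.le), mul_nonneg hX (mul_nonneg hr0.le hlen),
          mul_nonneg hX (mul_nonneg (sub_nonneg.2 hr3.le) hL.le)]

lemma testTerm_of_IJ_subset (hk : 1 ≤ k) {r q : ℝ} (hr0 : 0 < r) {j m : ℕ} {K I : ℝ × ℝ}
    (hK : K ∈ Kfam k j) (hI : IsTriadicAt ((((j + 1) * k : ℕ) : ℤ) - m) I)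
    (hIK : ivSet I ⊆ ivSet K) (hImid : Disjoint (ivSet I) (ivSet (mid K)))
    (hIJ : ivSet (IJ k ch (mid K)) ⊆ ivSet I) :
    avg (layerFn k ch r) I ^ q * avg (layerFn k ch (r ^ (1 - q))) I * len I =
      r ^ (j + 1) * levelLen k (j + 1) * ((3 : ℝ) ^ (-q)) ^ m := by
  rw [avg_layerFn_of_IJ_subset hk hr0.le hK hI hIK hImid hIJ,
    avg_layerFn_of_IJ_subset hk (by positivity) hK hI hIK hImid hIJ,
    testTerm_eq hr0 (by positivity), hI.len_eq_pow_mul_levelLen, inv_pow_rpow zero_le_three]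
  field_simp

theorem sumTest_secondFamily_le (hk : 1 ≤ k) {r q : ℝ} (hr0 : 0 < r) (hq : 1 ≤ q)
    {S : Set (ℝ × ℝ)} (htri : ∀ I ∈ S, IsTriadic I) {j : ℕ} {K SJ : ℝ × ℝ} (hK : K ∈ Kfam k j)
    (hSJ : SJ = (K.1, K.1 + len K / 3) ∨ SJ = mid K ∨ SJ = (K.2 - len K / 3, K.2))
    (hIJ : ivSet (IJ k ch (mid K)) ⊆ ivSet SJ) :
    sumTest q (layerFn k ch r) (layerFn k ch (r ^ (1 - q))) (secondFamily k ch S K SJ) ≤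
      r ^ (j + 1) * levelLen k (j + 1) / 2 := by
  obtain ⟨hSJK, hSJmid⟩ := subset_disjoint_mid_of_IJ_subset_third hk hK hSJ hIJ
  have hscale : ∀ I ∈ secondFamily k ch S K SJ, ∃ m : ℕ, 1 ≤ m ∧
      IsTriadicAt ((((j + 1) * k : ℕ) : ℤ) - m) I :=
    fun I hI => exists_scale_of_IJ_ssubset hk hK (htri I hI.1) hI.2.1
  choose! m hm1 hmI using hscale
  have hinj : Set.InjOn m (secondFamily k ch S K SJ) := fun I hI I' hI' hII' => by
    refine (hmI I hI).eq_of_not_disjoint (hII' ▸ hmI I' hI') fun hdisj => ?_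
    obtain ⟨x, hx⟩ := ivSet_nonempty (IJ_mid_isTriadicAt hk ch hK).fst_lt_snd
    exact hdisj.notMem_of_mem_left (hI.2.1.1 hx) (hI'.2.1.1 hx)
  have hratio : (3 : ℝ) ^ (-q) ≤ 1 / 3 := by
    rw [show (1 : ℝ) / 3 = 3 ^ (-1 : ℝ) by norm_num]
    exact Real.rpow_le_rpow_of_exponent_le (by norm_num) (by linarith)
  have hX : 0 ≤ r ^ (j + 1) * levelLen k (j + 1) :=
    mul_nonneg (by positivity) (levelLen_pos k (j + 1)).le
  refine sumTest_le_of_forall_finset (by positivity) fun s hs => ?_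
  rw [Finset.sum_congr rfl fun I hI => testTerm_of_IJ_subset hk hr0 hK (hmI I (hs hI))
      ((hs hI).2.2.trans hSJK) (hSJmid.mono_left (hs hI).2.2) (hs hI).2.1.1,
    ← Finset.mul_sum, ← mul_one_div]
  exact mul_le_mul_of_nonneg_left (sum_pow_le_half (hinj.mono hs) (fun I hI => hm1 I (hs hI))
    (by positivity) hratio) hX

end TestSums

section MainEstimates

variable {p ε : ℝ} {k j : ℕ} {ch : ℝ × ℝ → Bool} {S : Set (ℝ × ℝ)} {K : ℝ × ℝ}

lemma layerDensity_wBase (hk : 1 ≤ k) : layerDensity k (wBase k) = 1 := by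
  have h1 : 3 ^ k * levelLen k 1 = 1 := by simp [levelLen]
  rw [three_pow_eq_three_mul hk] at h1
  rw [layerDensity, wBase, three_pow_eq_three_mul hk]
  field_simp
  linear_combination h1

lemma layerDensity_le {r : ℝ} (hr1 : r ≤ 1) :
    layerDensity k r ≤ 3 / 2 * levelLen k 1 := by
  rw [layerDensity, div_le_iff₀ (by linarith)]
  nlinarith [levelLen_pos k 1]

lemma mul_levelLen_le_layerDensity {r : ℝ} (hr0 : 0 ≤ r) (hr3 : r < 3) :
    r * levelLen k 1 ≤ layerDensity k r := by
  rw [layerDensity, le_div_iff₀ (by linarith)]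
  nlinarith [mul_nonneg (mul_nonneg hr0 hr0) (levelLen_pos k 1).le]

lemma wBase_rpow_one_sub_mem_Ioo (hp : 1 < p) (hk : 1 ≤ k) : wBase k ^ (1 - p) ∈ Ioo 0 1 :=
  ⟨Real.rpow_pos_of_pos (wBase_pos k) _,
    Real.rpow_lt_one_of_one_lt_of_neg (one_lt_wBase hk) (by linarith)⟩

lemma rpow_one_sub_rpow_one_sub_div {x : ℝ} (hx : 0 ≤ x) (hp : p ≠ 1) :
    (x ^ (1 - p)) ^ (1 - p / (p - 1)) = x := by
  rw [← Real.rpow_mul hx]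
  convert Real.rpow_one x using 2
  field_simp [sub_ne_zero.2 hp]
  ring

lemma wgt_eq_layerFn_conj (hp : 1 < p) (hk : 1 ≤ k) :
    wgt k ch = layerFn k ch ((wBase k ^ (1 - p)) ^ (1 - p / (p - 1))) := by
  rw [rpow_one_sub_rpow_one_sub_div (wBase_pos k).le hp.ne', wgt_eq_layerFn hk]

lemma sumTest_wgt_firstFamily_le (hp : 1 < p) (hk : 1 ≤ k) (hε0 : 0 ≤ ε) (hε1 : ε < 1)
    (hS : MSparse ε S) (htri : ∀ I ∈ S, IsTriadic I ∧ ivSet I ⊆ Ico 0 1) (hK : K ∈ Kfam k j) :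
    sumTest p (wgt k ch) (sgm p k ch) (firstFamily k S K) ≤
      4 * ((3 : ℝ) ^ (-(k : ℤ)) * mass (wgt k ch) K) / (1 - ε) := by
  obtain ⟨-, hb1⟩ := wBase_rpow_one_sub_mem_Ioo hp hk
  rw [wgt_eq_layerFn hk, sgm_eq_layerFn hk,
    mass_layerFn_Kfam hk (wBase_pos k).le (wBase_lt_three hk) hK, layerDensity_wBase hk,
    ← levelLen_one]
  refine (sumTest_firstFamily_le hk (wBase_pos k) (wBase_lt_three hk) (by linarith) hε0 hε1
    hS htri hK).trans ?_
  rw [layerDensity_wBase hk, Real.one_rpow, one_mul]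
  have hX : 0 ≤ wBase k ^ j * levelLen k j :=
    mul_nonneg (pow_nonneg (wBase_pos k).le j) (levelLen_pos k j).le
  gcongr ?_ / _
  nlinarith [layerDensity_le (k := k) hb1.le, levelLen_pos k 1]

lemma sumTest_sgm_firstFamily_le (hp : 1 < p) (hk : 1 ≤ k) (hε0 : 0 ≤ ε) (hε1 : ε < 1)
    (hS : MSparse ε S) (htri : ∀ I ∈ S, IsTriadic I ∧ ivSet I ⊆ Ico 0 1) (hK : K ∈ Kfam k j) :
    sumTest (p / (p - 1)) (sgm p k ch) (wgt k ch) (firstFamily k S K) ≤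
      4 * mass (sgm p k ch) K / (1 - ε) := by
  obtain ⟨hb0, hb1⟩ := wBase_rpow_one_sub_mem_Ioo hp hk
  set b := wBase k ^ (1 - p)
  have hκ0 := layerDensity_nonneg (k := k) hb0.le (by linarith)
  have hκ1 : layerDensity k b ≤ 1 := (layerDensity_le hb1.le).trans
    (by linarith [levelLen_one_le_third hk])
  have hq : 1 ≤ p / (p - 1) := by rw [le_div_iff₀ (by linarith)]; linarith
  have ha3 : b ^ (1 - p / (p - 1)) < 3 := by
    rw [rpow_one_sub_rpow_one_sub_div (wBase_pos k).le hp.ne']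
    exact wBase_lt_three hk
  rw [wgt_eq_layerFn_conj hp hk, sgm_eq_layerFn hk, mass_layerFn_Kfam hk hb0.le (by linarith) hK]
  refine (sumTest_firstFamily_le hk hb0 (by linarith) ha3 hε0 hε1 hS htri hK).trans ?_
  rw [rpow_one_sub_rpow_one_sub_div (wBase_pos k).le hp.ne', layerDensity_wBase hk, mul_one]
  have hX : 0 ≤ b ^ j * levelLen k j := mul_nonneg (pow_nonneg hb0.le j) (levelLen_pos k j).le
  have hpow : layerDensity k b ^ (p / (p - 1)) ≤ layerDensity k b :=
    (Real.rpow_le_rpow_of_exponent_ge' hκ0 hκ1 zero_le_one hq).trans_eq (Real.rpow_one _)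
  gcongr ?_ / _
  nlinarith

lemma sumTest_wgt_secondFamily_le (hp : 1 < p) (hk : 1 ≤ k) (hε0 : 0 ≤ ε) (hε1 : ε < 1)
    (htri : ∀ I ∈ S, IsTriadic I) (hK : K ∈ Kfam k j) {SJ : ℝ × ℝ}
    (hSJ : SJ = (K.1, K.1 + len K / 3) ∨ SJ = mid K ∨ SJ = (K.2 - len K / 3, K.2))
    (hIJ : ivSet (IJ k ch (mid K)) ⊆ ivSet SJ) :
    sumTest p (wgt k ch) (sgm p k ch) (secondFamily k ch S K SJ) ≤
      4 * ((3 : ℝ) ^ (-(k : ℤ)) * mass (wgt k ch) K) / (1 - ε) := by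
  rw [wgt_eq_layerFn hk, sgm_eq_layerFn hk,
    mass_layerFn_Kfam hk (wBase_pos k).le (wBase_lt_three hk) hK, layerDensity_wBase hk,
    ← levelLen_one]
  refine (sumTest_secondFamily_le hk (wBase_pos k) hp.le htri hK hSJ hIJ).trans ?_
  rw [le_div_iff₀ (by linarith), pow_succ, levelLen_succ]
  have hX : 0 ≤ wBase k ^ j * levelLen k j * levelLen k 1 :=
    mul_nonneg (mul_nonneg (pow_nonneg (wBase_pos k).le j) (levelLen_pos k j).le)
      (levelLen_pos k 1).le
  have ha : wBase k * (1 - ε) ≤ 8 := by nlinarith [wBase_lt_three hk, wBase_pos k]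
  nlinarith [mul_le_mul_of_nonneg_left ha hX]

lemma sumTest_sgm_secondFamily_le (hp : 1 < p) (hk : 1 ≤ k) (hε0 : 0 ≤ ε) (hε1 : ε < 1)
    (htri : ∀ I ∈ S, IsTriadic I) (hK : K ∈ Kfam k j) {SJ : ℝ × ℝ}
    (hSJ : SJ = (K.1, K.1 + len K / 3) ∨ SJ = mid K ∨ SJ = (K.2 - len K / 3, K.2))
    (hIJ : ivSet (IJ k ch (mid K)) ⊆ ivSet SJ) :
    sumTest (p / (p - 1)) (sgm p k ch) (wgt k ch) (secondFamily k ch S K SJ) ≤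
      4 * mass (sgm p k ch) K / (1 - ε) := by
  obtain ⟨hb0, hb1⟩ := wBase_rpow_one_sub_mem_Ioo hp hk
  set b := wBase k ^ (1 - p)
  have hq : 1 ≤ p / (p - 1) := by rw [le_div_iff₀ (by linarith)]; linarith
  rw [wgt_eq_layerFn_conj hp hk, sgm_eq_layerFn hk, mass_layerFn_Kfam hk hb0.le (by linarith) hK]
  refine (sumTest_secondFamily_le hk hb0 hq htri hK hSJ hIJ).trans ?_
  rw [le_div_iff₀ (by linarith), pow_succ, levelLen_succ]
  have hX : 0 ≤ b ^ j * levelLen k j := mul_nonneg (pow_nonneg hb0.le j) (levelLen_pos k j).le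
  have hκ := mul_le_mul_of_nonneg_left
    (mul_levelLen_le_layerDensity (k := k) hb0.le (by linarith : b < 3)) hX
  have hκ0 : 0 ≤ b ^ j * levelLen k j * layerDensity k b :=
    mul_nonneg hX (layerDensity_nonneg hb0.le (by linarith))
  nlinarith [mul_le_mul_of_nonneg_right hκ (by linarith : (0 : ℝ) ≤ 1 - ε)]

end MainEstimates

/-- Lemma 4.6 (a) of the paper: the testing sums over the families `𝒮¹_K` and `𝒮²_K`
are bounded by `C(p)·3^{-k}·w_k(K)/(1-ε)` and `C(p)·σ_k(K)/(1-ε)`. Here `SJ` denotes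
the triadic child of `K` containing `I(J)`, `J := K^m`. -/
theorem statement7 (p : ℝ) (hp : 1 < p) :
    ∃ C : ℝ, 0 < C ∧ ∀ k : ℕ, 3000 < k → ∀ ch : ℝ × ℝ → Bool,
      ∀ ε : ℝ, 0 < ε → ε < 1 → ∀ S : Set (ℝ × ℝ), MSparse ε S →
      (∀ I ∈ S, IsTriadic I ∧ ivSet I ⊆ Set.Ico (0 : ℝ) 1) →
      ∀ K ∈ KK k, ∀ SJ : ℝ × ℝ,
        (SJ = (K.1, K.1 + len K / 3) ∨ SJ = mid K ∨ SJ = (K.2 - len K / 3, K.2)) →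
        ivSet (IJ k ch (mid K)) ⊆ ivSet SJ →
        ((sumTest p (wgt k ch) (sgm p k ch)
              {I | I ∈ S ∧ (I = K ∨ (ivSet I ⊆ ivSet (mid K) ∧
                ∀ K' ∈ chK k K, ¬ ivSet I ⊆ ivSet K'))} ≤
            C * ((3 : ℝ) ^ (-(k : ℤ)) * mass (wgt k ch) K) / (1 - ε) ∧
          sumTest (p / (p - 1)) (sgm p k ch) (wgt k ch)
              {I | I ∈ S ∧ (I = K ∨ (ivSet I ⊆ ivSet (mid K) ∧
                ∀ K' ∈ chK k K, ¬ ivSet I ⊆ ivSet K'))} ≤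
            C * mass (sgm p k ch) K / (1 - ε)) ∧
         (sumTest p (wgt k ch) (sgm p k ch)
              {I | I ∈ S ∧ ivSet (IJ k ch (mid K)) ⊂ ivSet I ∧ ivSet I ⊆ ivSet SJ} ≤
            C * ((3 : ℝ) ^ (-(k : ℤ)) * mass (wgt k ch) K) / (1 - ε) ∧
          sumTest (p / (p - 1)) (sgm p k ch) (wgt k ch)
              {I | I ∈ S ∧ ivSet (IJ k ch (mid K)) ⊂ ivSet I ∧ ivSet I ⊆ ivSet SJ} ≤
            C * mass (sgm p k ch) K / (1 - ε))) := by
  refine ⟨4, by norm_num, fun k hk ch ε hε0 hε1 S hS htri K hK SJ hSJ hIJ => ?_⟩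
  obtain ⟨j, hKj⟩ := mem_iUnion.1 hK
  have hk1 : 1 ≤ k := by omega
  have htri' : ∀ I ∈ S, IsTriadic I := fun I hI => (htri I hI).1
  exact ⟨⟨sumTest_wgt_firstFamily_le hp hk1 hε0.le hε1 hS htri hKj,
      sumTest_sgm_firstFamily_le hp hk1 hε0.le hε1 hS htri hKj⟩,
    sumTest_wgt_secondFamily_le hp hk1 hε0.le hε1 htri' hKj hSJ hIJ,
      sumTest_sgm_secondFamily_le hp hk1 hε0.le hε1 htri' hKj hSJ hIJ⟩

end RTpaper
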